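/- arXiv:2601.18755 — 3 statements merged into one kernel-verified Lean document; each statement's English description precedes it below -/
import Mathlib

section
/- Let Δ be an acyclic simplicial complex on n+2 vertices u, w, v₁, …, vₙ (n ≥ 1) such that for each k = 1, …, n, the induced subcomplex of Δ on {u, w, v₁, …, v̂ₖ, …, vₙ} is the bipyramid over {v₁, …, v̂ₖ, …, vₙ}, i.e., it consists of all subsets of {u,w,v₁,…,v̂ₖ,…,vₙ} not containing both u and w. Then Δ is the bipyramid over {v₁, …, vₙ}: Δ consists of exactly all subsets of the vertex set not containing both u and w. -/
/-- A (combinatorial) simplicial complex: a downward-closed family of finite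
subsets of the vertex type `V`. -/
def IsComplex {V : Type} (Δ : Finset V → Prop) : Prop :=
  ∀ σ τ : Finset V, τ ⊆ σ → Δ σ → Δ τ

/-- The simplicial boundary operator on formal `k`-linear combinations of finite
subsets of `V`, with signs determined by the linear order on `V`. -/
noncomputable def bdry (V : Type) [DecidableEq V] [LinearOrder V]
    (k : Type) [Field k] : (Finset V →₀ k) →ₗ[k] (Finset V →₀ k) :=
  Finsupp.lsum k fun σ => LinearMap.toSpanSingleton k _
    (∑ v ∈ σ, ((-1 : k) ^ ((σ.filter (fun u => u < v)).card)) • Finsupp.single (σ.erase v) (1 : k))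

/-- Vanishing of the reduced simplicial homology `H̃_{n-1}(Δ; k)`: chains in
chain degree `n` are supported on faces of cardinality `n` (so chain degree `n`
corresponds to homological degree `n - 1`, and the empty face sits in chain
degree `0`).  The homology vanishes iff every cycle is a boundary. -/
def HredVanish {V : Type} [DecidableEq V] [LinearOrder V]
    (Δ : Finset V → Prop) (k : Type) [Field k] (n : ℕ) : Prop :=
  ∀ x ∈ Finsupp.supported k k {σ : Finset V | Δ σ ∧ σ.card = n},
    bdry V k x = 0 →
      ∃ y ∈ Finsupp.supported k k {σ : Finset V | Δ σ ∧ σ.card = n + 1},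
        bdry V k y = x

set_option linter.unusedSectionVars false

namespace BPaux

open Finset

variable {V : Type} [DecidableEq V] [LinearOrder V] (k : Type) [Field k]

noncomputable def sgn (σ : Finset V) (x : V) : k :=
  (-1 : k) ^ ((σ.filter (fun u => u < x)).card)

lemma sgn_ne_zero (σ : Finset V) (x : V) : sgn k σ x ≠ 0 := by
  simp [sgn]

noncomputable def M (σ : Finset V) : Finset V →₀ k :=
  ∑ x ∈ σ, sgn k σ x • Finsupp.single (σ.erase x) (1 : k)

lemma bdry_single (σ : Finset V) (c : k) :
    bdry V k (Finsupp.single σ c) = c • M k σ := by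
  rw [bdry, Finsupp.lsum_single, LinearMap.toSpanSingleton_apply]
  rfl

lemma M_apply_self {σ : Finset V} {x : V} (hx : x ∈ σ) :
    M k σ (σ.erase x) = sgn k σ x := by
  rw [M, Finsupp.finset_sum_apply]
  rw [Finset.sum_eq_single x]
  · simp
  · intro y hy hyx
    have : σ.erase y ≠ σ.erase x := fun h => hyx (σ.erase_injOn hy hx h)
    simp [Finsupp.single_apply, this]
  · intro h; exact absurd hx h

lemma M_apply_ne {σ τ : Finset V} (h : ∀ x ∈ σ, σ.erase x ≠ τ) :
    M k σ τ = 0 := by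
  rw [M, Finsupp.finset_sum_apply]
  refine Finset.sum_eq_zero fun x hx => ?_
  simp [Finsupp.single_apply, h x hx]

lemma M_ne_imp {σ τ : Finset V} (h : M k σ τ ≠ 0) : ∃ x ∈ σ, σ.erase x = τ := by
  by_contra hc
  push_neg at hc
  exact h (M_apply_ne k hc)

lemma sgn_erase_of_lt {σ : Finset V} {x y : V} (hyx : y < x) :
    sgn k (σ.erase x) y = sgn k σ y := by
  unfold sgn
  congr 2
  rw [Finset.filter_erase, Finset.erase_eq_of_notMem]
  simp only [Finset.mem_filter, not_and]
  intro _ hlt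
  exact absurd hyx (not_lt.mpr (le_of_lt hlt))

lemma sgn_erase_of_gt {σ : Finset V} {x y : V} (hy : y ∈ σ) (hyx : y < x) :
    sgn k (σ.erase y) x = -sgn k σ x := by
  unfold sgn
  rw [Finset.filter_erase, Finset.card_erase_of_mem (by simp [hy, hyx])]
  have hpos : 0 < (σ.filter (fun u => u < x)).card :=
    Finset.card_pos.mpr ⟨y, by simp [hy, hyx]⟩
  rcases Nat.exists_eq_add_of_lt hpos with ⟨m, hm⟩
  rw [hm]
  simp [pow_succ]

lemma sgn_antisymm {σ : Finset V} {x y : V} (hx : x ∈ σ) (hy : y ∈ σ) (hxy : x ≠ y) :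
    sgn k σ x * sgn k (σ.erase x) y = -(sgn k σ y * sgn k (σ.erase y) x) := by
  rcases lt_or_gt_of_ne hxy with h | h
  · rw [sgn_erase_of_gt k hx h, sgn_erase_of_lt k h]; ring
  · rw [sgn_erase_of_lt k h, sgn_erase_of_gt k hy h]; ring

lemma bdry_M (σ : Finset V) : bdry V k (M k σ) = 0 := by
  rw [M, map_sum]
  simp only [map_smul, bdry_single, one_smul]
  have hcongr : ∀ x ∈ σ, sgn k σ x • M k (σ.erase x)
      = ∑ y ∈ σ.erase x, (sgn k σ x * sgn k (σ.erase x) y) •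
          Finsupp.single ((σ.erase x).erase y) (1 : k) := by
    intro x _
    rw [M, Finset.smul_sum]
    simp [smul_smul]
  rw [Finset.sum_congr rfl hcongr, Finset.sum_sigma' σ (fun x => σ.erase x)]
  refine Finset.sum_involution (fun p _ => ⟨p.2, p.1⟩) ?_ ?_ ?_ ?_
  · rintro ⟨x, y⟩ hp
    simp only [Finset.mem_sigma, Finset.mem_erase] at hp
    obtain ⟨hx, hyx, hy⟩ := hp
    have hs := sgn_antisymm k hx hy (Ne.symm hyx)
    show (sgn k σ x * sgn k (σ.erase x) y) • Finsupp.single ((σ.erase x).erase y) (1 : k)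
      + (sgn k σ y * sgn k (σ.erase y) x) • Finsupp.single ((σ.erase y).erase x) (1 : k) = 0
    rw [Finset.erase_right_comm (a := y) (b := x), hs, neg_smul, neg_add_cancel]
  · rintro ⟨x, y⟩ hp _
    simp only [Finset.mem_sigma, Finset.mem_erase] at hp
    intro h
    exact hp.2.1 (by simpa using congrArg Sigma.fst h)
  · rintro ⟨x, y⟩ hp
    simp only [Finset.mem_sigma, Finset.mem_erase] at hp ⊢
    exact ⟨hp.2.2, Ne.symm hp.2.1, hp.1⟩
  · rintro ⟨x, y⟩ hp; rfl

lemma bdry_eq (f : Finset V →₀ k) :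
    bdry V k f = ∑ σ ∈ f.support, f σ • M k σ := by
  conv_lhs => rw [← Finsupp.sum_single f]
  rw [Finsupp.sum, map_sum]
  exact Finset.sum_congr rfl fun σ _ => bdry_single k σ (f σ)

/-- The key homological step: if `Δ` contains all faces `(insert u T).erase x`
and `(insert w T).erase x` for `x ∈ T`, every face of `Δ` lies in the bipyramid
vertex set and avoids `{u, w}`, and `H̃` vanishes in the relevant degree, then
the facet `insert u T` is a face of `Δ`. -/
lemma key (n : ℕ) (Δ : Finset V → Prop)
    (T : Finset V) (hTcard : T.card = n) (u w : V)
    (huT : u ∉ T) (hwT : w ∉ T) (huw : u ≠ w)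
    (hvert : ∀ σ, Δ σ → σ ⊆ insert u (insert w T))
    (noUW : ∀ σ, Δ σ → ¬ (u ∈ σ ∧ w ∈ σ))
    (t0 : V) (ht0 : t0 ∈ T)
    (hAi : ∀ x ∈ T, Δ ((insert u T).erase x))
    (hBi : ∀ x ∈ T, Δ ((insert w T).erase x))
    (hacyclic : HredVanish Δ k n) :
    Δ (insert u T) := by
  classical
  set A : Finset V := insert u T with hA
  set B : Finset V := insert w T with hB
  have huA : u ∈ A := mem_insert_self _ _
  have hwB : w ∈ B := mem_insert_self _ _
  have huB : u ∉ B := by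
    rw [hB, mem_insert]
    push_neg
    exact ⟨huw, huT⟩
  have hAeu : A.erase u = T := erase_insert huT
  have hBew : B.erase w = T := erase_insert hwT
  have hut0 : u ≠ t0 := fun h => huT (h ▸ ht0)
  have hAcard : A.card = n + 1 := by rw [hA, card_insert_of_notMem huT, hTcard]
  set cA : k := sgn k A u with hcA
  set cB : k := sgn k B w with hcB
  set z : Finset V →₀ k :=
    bdry V k (Finsupp.single A cB - Finsupp.single B cA) with hz
  have hzval : ∀ τ, z τ = cB * M k A τ - cA * M k B τ := by
    intro τ
    rw [hz, map_sub, bdry_single, bdry_single]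
    simp [mul_comm]
  have hzT : z T = 0 := by
    have h1 : M k A T = cA := by rw [hcA, ← hAeu]; exact M_apply_self k huA
    have h2 : M k B T = cB := by rw [hcB, ← hBew]; exact M_apply_self k hwB
    rw [hzval, h1, h2]; ring
  have hzsupp : ∀ τ ∈ z.support, Δ τ ∧ τ.card = n := by
    intro τ hτ
    have hzτ : z τ ≠ 0 := Finsupp.mem_support_iff.mp hτ
    have hτT : τ ≠ T := fun h => hzτ (by rw [h, hzT])
    have hcase : M k A τ ≠ 0 ∨ M k B τ ≠ 0 := by
      by_contra hc
      push_neg at hc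
      exact hzτ (by rw [hzval, hc.1, hc.2]; ring)
    have hBcard : B.card = n + 1 := by rw [hB, card_insert_of_notMem hwT, hTcard]
    rcases hcase with h | h
    · obtain ⟨x, hx, he⟩ := M_ne_imp k h
      have hx' := hx
      rw [hA, mem_insert] at hx'
      rcases hx' with rfl | hxT
      · exact absurd (by rw [← he]; exact hAeu) hτT
      · subst he
        exact ⟨hAi x hxT, by rw [card_erase_of_mem hx, hAcard]; rfl⟩
    · obtain ⟨x, hx, he⟩ := M_ne_imp k h
      have hx' := hx
      rw [hB, mem_insert] at hx'
      rcases hx' with rfl | hxT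
      · exact absurd (by rw [← he]; exact hBew) hτT
      · subst he
        exact ⟨hBi x hxT, by rw [card_erase_of_mem hx, hBcard]; rfl⟩
  have hzcycle : bdry V k z = 0 := by
    rw [hz, map_sub, bdry_single, bdry_single, map_sub, map_smul, map_smul,
      bdry_M, bdry_M]
    simp
  obtain ⟨y, hy, hyz⟩ := hacyclic z
    ((Finsupp.mem_supported k z).mpr fun τ hτ => hzsupp τ (Finset.mem_coe.mp hτ)) hzcycle
  have hysupp : ∀ σ ∈ y.support, Δ σ := fun σ hσ =>
    ((Finsupp.mem_supported k y).mp hy (Finset.mem_coe.mpr hσ)).1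
  set τ0 : Finset V := A.erase t0 with hτ0
  have ht0A : t0 ∈ A := by rw [hA]; exact mem_insert_of_mem ht0
  have huτ0 : u ∈ τ0 := mem_erase.mpr ⟨hut0, huA⟩
  have hMBτ0 : M k B τ0 = 0 := by
    refine M_apply_ne k fun x hx he => ?_
    apply huB
    apply mem_of_mem_erase (a := x)
    rw [he]
    exact huτ0
  have hMAτ0 : M k A τ0 = sgn k A t0 := M_apply_self k ht0A
  have hzτ0 : z τ0 = cB * sgn k A t0 := by rw [hzval, hMAτ0, hMBτ0]; ring
  have hbyτ0 : z τ0 = y A * sgn k A t0 := by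
    calc z τ0 = (bdry V k y) τ0 := by rw [hyz]
      _ = ∑ σ ∈ y.support, y σ * M k σ τ0 := by
          rw [bdry_eq, Finsupp.finset_sum_apply]
          exact Finset.sum_congr rfl fun σ _ => by rw [Finsupp.smul_apply, smul_eq_mul]
      _ = y A * M k A τ0 := by
          refine Finset.sum_eq_single A (fun σ hσ hne => ?_)
            (fun h => by simp [Finsupp.notMem_support_iff.mp h])
          have hΔσ := hysupp σ hσ
          have h0 : M k σ τ0 = 0 := by
            refine M_apply_ne k fun x hx he => ?_
            have hτσ : τ0 ⊆ σ := by rw [← he]; exact erase_subset _ _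
            have hxτ0 : x ∉ τ0 := by rw [← he]; exact notMem_erase _ _
            have hxS := hvert σ hΔσ hx
            rcases mem_insert.mp hxS with rfl | hxS
            · exact hxτ0 huτ0
            rcases mem_insert.mp hxS with rfl | hxT
            · exact noUW σ hΔσ ⟨hτσ huτ0, hx⟩
            by_cases hxt : x = t0
            · subst hxt
              apply hne
              rw [← insert_erase hx, he, hτ0, insert_erase ht0A]
            · exact hxτ0 (mem_erase.mpr ⟨hxt, by rw [hA]; exact mem_insert_of_mem hxT⟩)
          rw [h0, mul_zero]
      _ = y A * sgn k A t0 := by rw [hMAτ0]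
  have hyAcB : y A = cB := mul_right_cancel₀ (sgn_ne_zero k A t0) (hbyτ0.symm.trans hzτ0)
  have hyA : y A ≠ 0 := by
    rw [hyAcB, hcB]
    exact sgn_ne_zero k B w
  exact hysupp A (Finsupp.mem_support_iff.mpr hyA)

end BPaux

open BPaux Finset
/-- Let `Δ` be an acyclic simplicial complex on `n + 2` vertices
`u, w, v 0, …, v (n-1)` (with `n ≥ 1`) such that for each `j`, the induced
subcomplex on the vertex set with `v j` removed is the bipyramid over the
remaining base vertices (all subsets of that vertex set not containing both `u`
and `w`).  Then `Δ` is the bipyramid over `{v 0, …, v (n-1)}`: its faces are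
exactly the subsets of the full vertex set not containing both `u` and `w`. -/
theorem bipyramid_of_induced_bipyramids {V : Type} [DecidableEq V] [LinearOrder V] [Fintype V]
    (k : Type) [Field k] (n : ℕ) (hn : 1 ≤ n)
    (u w : V) (v : Fin n → V) (hinj : Function.Injective v) (huw : u ≠ w)
    (hvu : ∀ i, v i ≠ u) (hvw : ∀ i, v i ≠ w)
    (Δ : Finset V → Prop) (hΔ : IsComplex Δ)
    (hvert : ∀ σ : Finset V, Δ σ → σ ⊆ insert u (insert w (Finset.image v Finset.univ)))
    (hsingu : Δ {u}) (hsingw : Δ {w}) (hsingv : ∀ i, Δ {v i})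
    (hacyclic : ∀ m : ℕ, HredVanish Δ k m)
    (hind : ∀ j : Fin n, ∀ σ : Finset V,
      (Δ σ ∧ σ ⊆ insert u (insert w ((Finset.image v Finset.univ).erase (v j)))) ↔
        (σ ⊆ insert u (insert w ((Finset.image v Finset.univ).erase (v j))) ∧
          ¬ ({u, w} : Finset V) ⊆ σ)) :
    ∀ σ : Finset V,
      Δ σ ↔ (σ ⊆ insert u (insert w (Finset.image v Finset.univ)) ∧
        ¬ ({u, w} : Finset V) ⊆ σ) := by
  classical
  set T : Finset V := Finset.image v Finset.univ with hT
  have huT : u ∉ T := by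
    rw [hT]
    simp only [mem_image, not_exists]
    rintro i ⟨-, h⟩
    exact hvu i h
  have hwT : w ∉ T := by
    rw [hT]
    simp only [mem_image, not_exists]
    rintro i ⟨-, h⟩
    exact hvw i h
  have hTcard : T.card = n := by
    rw [hT, Finset.card_image_of_injective _ hinj, Finset.card_univ, Fintype.card_fin]
  have huwsub : ∀ σ : Finset V, ({u, w} : Finset V) ⊆ σ ↔ u ∈ σ ∧ w ∈ σ := by
    intro σ
    rw [Finset.insert_subset_iff, Finset.singleton_subset_iff]
  have j0 : Fin n := ⟨0, hn⟩
  -- no face of Δ contains both u and w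
  have noUW : ∀ σ : Finset V, Δ σ → ¬ (u ∈ σ ∧ w ∈ σ) := by
    intro σ hσ ⟨hu, hw⟩
    have hsub : ({u, w} : Finset V) ⊆ σ := (huwsub σ).mpr ⟨hu, hw⟩
    have huwΔ : Δ {u, w} := hΔ σ {u, w} hsub hσ
    have hsub2 : ({u, w} : Finset V) ⊆ insert u (insert w (T.erase (v j0))) := by
      intro x hx
      rcases mem_insert.mp hx with h | h
      · simp [h]
      · rw [Finset.mem_singleton] at h
        simp [h]
    exact ((hind j0 {u, w}).mp ⟨huwΔ, hsub2⟩).2 (subset_refl _)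
  -- faces missing some v i and avoiding {u, w} are in Δ
  have hΔ' : ∀ (i : Fin n) (σ : Finset V), v i ∉ σ →
      σ ⊆ insert u (insert w T) → ¬ ({u, w} : Finset V) ⊆ σ → Δ σ := by
    intro i σ hvi hσS hnuw
    have hsub : σ ⊆ insert u (insert w (T.erase (v i))) := by
      intro x hx
      have hxS := hσS hx
      rcases mem_insert.mp hxS with h | h
      · simp [h]
      rcases mem_insert.mp h with h | h
      · simp [h]
      · have hne : x ≠ v i := fun he => hvi (he ▸ hx)
        exact mem_insert_of_mem (mem_insert_of_mem (mem_erase.mpr ⟨hne, h⟩))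
    exact ((hind i σ).mpr ⟨hsub, hnuw⟩).1
  have hwA : w ∉ insert u T := by
    rw [mem_insert]
    push_neg
    exact ⟨Ne.symm huw, hwT⟩
  have huB : u ∉ insert w T := by
    rw [mem_insert]
    push_neg
    exact ⟨huw, huT⟩
  have hAi : ∀ x ∈ T, Δ ((insert u T).erase x) := by
    intro x hx
    obtain ⟨i, -, rfl⟩ := mem_image.mp (hT ▸ hx)
    refine hΔ' i _ (notMem_erase _ _)
      ((erase_subset _ _).trans (insert_subset_insert _ (subset_insert _ _))) ?_
    intro hsub
    exact hwA (mem_of_mem_erase (hsub (by simp)))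
  have hBi : ∀ x ∈ T, Δ ((insert w T).erase x) := by
    intro x hx
    obtain ⟨i, -, rfl⟩ := mem_image.mp (hT ▸ hx)
    refine hΔ' i _ (notMem_erase _ _) ?_ ?_
    · refine (erase_subset _ _).trans ?_
      intro a ha
      exact mem_insert_of_mem ha
    · intro hsub
      exact huB (mem_of_mem_erase (hsub (by simp)))
  have ht0 : v j0 ∈ T := by rw [hT]; exact mem_image_of_mem v (mem_univ j0)
  have hvertB : ∀ σ, Δ σ → σ ⊆ insert w (insert u T) := by
    intro σ hσ
    rw [Finset.insert_comm]
    exact hvert σ hσ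
  have hΔA : Δ (insert u T) :=
    key k n Δ T hTcard u w huT hwT huw hvert noUW (v j0) ht0 hAi hBi (hacyclic n)
  have hΔB : Δ (insert w T) :=
    key k n Δ T hTcard w u hwT huT (Ne.symm huw) hvertB
      (fun σ hσ h => noUW σ hσ ⟨h.2, h.1⟩) (v j0) ht0 hBi hAi (hacyclic n)
  intro σ
  constructor
  · intro hσ
    exact ⟨hvert σ hσ, fun hsub => noUW σ hσ ((huwsub σ).mp hsub)⟩
  · rintro ⟨hσS, hnuw⟩
    rw [huwsub σ, not_and_or] at hnuw
    rcases hnuw with hu | hw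
    · refine hΔ (insert w T) σ ?_ hΔB
      intro x hx
      rcases mem_insert.mp (hσS hx) with rfl | h
      · exact absurd hx hu
      · exact h
    · refine hΔ (insert u T) σ ?_ hΔA
      intro x hx
      have hxS := hσS hx
      rcases mem_insert.mp hxS with rfl | h
      · exact mem_insert_self _ _
      rcases mem_insert.mp h with rfl | h
      · exact absurd hx hw
      · exact mem_insert_of_mem h
end

section
/- Fix the polynomial ring S = k[x₀,…,xₙ, y₀,…,yₖ] with n ≥ k ≥ 0 and irrelevant ideal B = ⟨x₀,…,xₙ⟩ ∩ ⟨y₀,…,yₖ⟩. Let Δ be the bipyramid over the k-simplex on vertices v₀,…,vₖ with apexes w₀, w₁, lcm-labeled by ℓ(vᵢ) = yᵢ, ℓ(w₀) = x₀, ℓ(w₁) = x₁. Then for every monomial m ∈ B and every i ≥ 0, the reduced homology H̃ᵢ(Δ_m; k) vanishes, while H̃₀(Δ_{x₀x₁}; k) ≠ 0. -/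
noncomputable def simplicialCone (V : Type) [DecidableEq V] [LinearOrder V]
    (K : Type) [Field K] (a : V) : (Finset V →₀ K) →ₗ[K] (Finset V →₀ K) :=
  Finsupp.lsum K fun σ => LinearMap.toSpanSingleton K _
    (if a ∈ σ then 0 else
      ((-1 : K) ^ ((σ.filter (fun u => u < a)).card)) • Finsupp.single (insert a σ) (1 : K))

section SimplicialCone

variable {V : Type} [DecidableEq V] [LinearOrder V] {K : Type} [Field K]

lemma bdry_single (σ : Finset V) (c : K) :
    bdry V K (Finsupp.single σ c)
      = c • ∑ v ∈ σ, ((-1 : K) ^ ((σ.filter (fun u => u < v)).card)) •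
          Finsupp.single (σ.erase v) (1 : K) := by
  simp [bdry, Finsupp.lsum_single, LinearMap.toSpanSingleton_apply]

lemma bdry_single_singleton (v : V) :
    bdry V K (Finsupp.single {v} 1) = Finsupp.single ∅ 1 := by
  simp [bdry_single, Finset.filter_singleton]

lemma simplicialCone_single (a : V) (σ : Finset V) (c : K) :
    simplicialCone V K a (Finsupp.single σ c)
      = c • (if a ∈ σ then 0 else
          ((-1 : K) ^ ((σ.filter (fun u => u < a)).card)) •
            Finsupp.single (insert a σ) (1 : K)) := by
  simp [simplicialCone, Finsupp.lsum_single, LinearMap.toSpanSingleton_apply]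

lemma simplicialCone_single_of_mem {a : V} {σ : Finset V} (ha : a ∈ σ) (c : K) :
    simplicialCone V K a (Finsupp.single σ c) = 0 := by
  rw [simplicialCone_single, if_pos ha, smul_zero]

/-- The two ways of passing from `σ` to `insert a (σ.erase v)` carry opposite signs. -/
lemma neg_one_pow_insert_erase_add {a v : V} {σ : Finset V} (ha : a ∉ σ) (hv : v ∈ σ) :
    (-1 : K) ^ (σ.filter (· < a)).card * (-1 : K) ^ ((insert a σ).filter (· < v)).card
      + (-1 : K) ^ (σ.filter (· < v)).card * (-1 : K) ^ ((σ.erase v).filter (· < a)).card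
      = 0 := by
  have hav : a ≠ v := fun h => ha (h ▸ hv)
  rw [Finset.filter_insert, Finset.filter_erase]
  rcases lt_or_gt_of_ne hav with h | h
  · rw [if_pos h, Finset.card_insert_of_notMem (by simp [ha]),
      Finset.erase_eq_of_notMem (by simp [asymm h]), pow_succ]
    ring
  · have hm : v ∈ σ.filter (· < a) := Finset.mem_filter.2 ⟨hv, h⟩
    obtain ⟨r, hr⟩ : ∃ r, (σ.filter (· < a)).card = r + 1 :=
      Nat.exists_eq_add_one.2 (Finset.card_pos.2 ⟨v, hm⟩)
    rw [if_neg (asymm h), Finset.card_erase_of_mem hm, hr, Nat.add_sub_cancel, pow_succ]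
    ring

lemma bdry_simplicialCone_add_simplicialCone_bdry_single_of_mem {a : V} {σ : Finset V}
    (ha : a ∈ σ) :
    bdry V K (simplicialCone V K a (Finsupp.single σ 1))
      + simplicialCone V K a (bdry V K (Finsupp.single σ 1)) = Finsupp.single σ 1 := by
  rw [simplicialCone_single_of_mem ha, map_zero, zero_add, bdry_single, one_smul, map_sum,
    Finset.sum_eq_single a
      (fun v hv hva => by
        rw [map_smul, simplicialCone_single_of_mem (Finset.mem_erase.2 ⟨Ne.symm hva, ha⟩),
          smul_zero])
      (fun h => absurd ha h),
    map_smul, simplicialCone_single, if_neg (Finset.notMem_erase a σ), one_smul,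
    Finset.insert_erase ha, Finset.filter_erase,
    Finset.erase_eq_of_notMem (by simp), smul_smul, ← mul_pow, neg_one_mul, neg_neg, one_pow,
    one_smul]

lemma bdry_simplicialCone_add_simplicialCone_bdry_single_of_notMem {a : V} {σ : Finset V}
    (ha : a ∉ σ) :
    bdry V K (simplicialCone V K a (Finsupp.single σ 1))
      + simplicialCone V K a (bdry V K (Finsupp.single σ 1)) = Finsupp.single σ 1 := by
  -- the face `σ` itself appears once, from deleting `a` again; all other terms cancel in pairs
  have hpair : ∀ v ∈ σ,
      (-1 : K) ^ (σ.filter (· < a)).card •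
          ((-1 : K) ^ ((insert a σ).filter (· < v)).card •
            Finsupp.single ((insert a σ).erase v) (1 : K))
        + simplicialCone V K a ((-1 : K) ^ (σ.filter (· < v)).card •
            Finsupp.single (σ.erase v) (1 : K)) = 0 := by
    intro v hv
    rw [map_smul, simplicialCone_single, if_neg (fun h => ha (Finset.mem_of_mem_erase h)),
      one_smul, Finset.erase_insert_of_ne (by rintro rfl; exact ha hv), smul_smul, smul_smul,
      ← add_smul, neg_one_pow_insert_erase_add ha hv, zero_smul]
  rw [simplicialCone_single, if_neg ha, one_smul, map_smul, bdry_single, one_smul,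
    Finset.sum_insert ha, smul_add, Finset.smul_sum, Finset.erase_insert ha,
    Finset.filter_insert, if_neg (lt_irrefl a), smul_smul, ← mul_pow, neg_one_mul, neg_neg,
    one_pow, one_smul, bdry_single, one_smul, map_sum, add_assoc, ← Finset.sum_add_distrib,
    Finset.sum_eq_zero hpair, add_zero]

lemma bdry_simplicialCone_add_simplicialCone_bdry (a : V) (x : Finset V →₀ K) :
    bdry V K (simplicialCone V K a x) + simplicialCone V K a (bdry V K x) = x := by
  have hmap : (bdry V K).comp (simplicialCone V K a) + (simplicialCone V K a).comp (bdry V K)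
      = LinearMap.id := by
    refine Finsupp.lhom_ext fun σ c => ?_
    rw [← mul_one c, ← smul_eq_mul, ← Finsupp.smul_single]
    simp only [LinearMap.add_apply, LinearMap.comp_apply, LinearMap.id_apply, map_smul]
    by_cases ha : a ∈ σ
    · rw [bdry_simplicialCone_add_simplicialCone_bdry_single_of_mem ha]
    · rw [bdry_simplicialCone_add_simplicialCone_bdry_single_of_notMem ha]
  simpa using LinearMap.congr_fun hmap x

lemma simplicialCone_mem_supported (a : V) {s t : Set (Finset V)}
    (h : ∀ σ ∈ s, a ∉ σ → insert a σ ∈ t) {x : Finset V →₀ K}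
    (hx : x ∈ Finsupp.supported K K s) :
    simplicialCone V K a x ∈ Finsupp.supported K K t := by
  rw [Finsupp.supported_eq_span_single] at hx
  induction hx using Submodule.span_induction with
  | mem z hz =>
    obtain ⟨σ, hσ, rfl⟩ := hz
    by_cases haσ : a ∈ σ
    · rw [simplicialCone_single_of_mem haσ]
      exact Submodule.zero_mem _
    · rw [simplicialCone_single, if_neg haσ, one_smul]
      exact Submodule.smul_mem _ _ (Finsupp.single_mem_supported K 1 (h σ hσ haσ))
  | zero => rw [map_zero]; exact Submodule.zero_mem _
  | add y z _ _ hy hz => rw [map_add]; exact Submodule.add_mem _ hy hz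
  | smul c y _ hy => rw [map_smul]; exact Submodule.smul_mem _ _ hy

theorem hredVanish_of_insert {Δ : Finset V → Prop} {a : V}
    (hΔ : ∀ σ, Δ σ → Δ (insert a σ)) (d : ℕ) : HredVanish Δ K d := by
  intro x hx hbx
  refine ⟨simplicialCone V K a x, simplicialCone_mem_supported a ?_ hx, ?_⟩
  · rintro σ ⟨hσ, hcard⟩ haσ
    exact ⟨hΔ σ hσ, by rw [Finset.card_insert_of_notMem haσ, hcard]⟩
  · simpa [hbx] using bdry_simplicialCone_add_simplicialCone_bdry a x

/-- Without edges, the cycle `{u} - {w}` cannot be a boundary. -/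
theorem not_hredVanish_one {Δ : Finset V → Prop} {u w : V} (huw : u ≠ w)
    (hu : Δ {u}) (hw : Δ {w}) (hedge : ∀ σ, Δ σ → σ.card ≠ 2) :
    ¬ HredVanish Δ K 1 := by
  intro hvan
  set x : Finset V →₀ K := Finsupp.single {u} 1 - Finsupp.single {w} 1
  have hx : x ∈ Finsupp.supported K K {σ | Δ σ ∧ σ.card = 1} :=
    Submodule.sub_mem _ (Finsupp.single_mem_supported K 1 ⟨hu, Finset.card_singleton u⟩)
      (Finsupp.single_mem_supported K 1 ⟨hw, Finset.card_singleton w⟩)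
  have hcycle : bdry V K x = 0 := by
    rw [map_sub, bdry_single_singleton, bdry_single_singleton, sub_self]
  obtain ⟨y, hy, hby⟩ := hvan x hx hcycle
  have hno_edges : {σ : Finset V | Δ σ ∧ σ.card = 1 + 1} = ∅ :=
    Set.eq_empty_of_forall_notMem fun σ hσ => hedge σ hσ.1 hσ.2
  rw [hno_edges, Finsupp.supported_empty, Submodule.mem_bot] at hy
  have hx0 := DFunLike.congr_fun (show x = 0 by rw [← hby, hy, map_zero]) {u}
  simp [x, Finset.singleton_injective.ne huw.symm] at hx0

end SimplicialCone

namespace Stmt8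

/-- Vertices of the bipyramid over a `k`-simplex: the base vertices are
`0, …, k` and the two apexes are `k + 1` and `k + 2`. -/
def w₀ (k : ℕ) : Fin (k + 3) := ⟨k + 1, by omega⟩

def w₁ (k : ℕ) : Fin (k + 3) := ⟨k + 2, by omega⟩

/-- The labeling of the bipyramid in `S = K[x₀,…,xₙ,y₀,…,y_k]`, monomials being
encoded by exponent vectors on `Fin (n+1) ⊕ Fin (k+1)` (`inl i ↦ xᵢ`,
`inr j ↦ yⱼ`): `ℓ(vⱼ) = yⱼ` for the base vertices, `ℓ(w₀) = x₀`, `ℓ(w₁) = x₁`. -/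
def lab (n k : ℕ) (hn : 1 ≤ n) (a : Fin (k + 3)) : (Fin (n + 1) ⊕ Fin (k + 1)) → ℕ :=
  fun t =>
    if h : (a : ℕ) ≤ k then (if t = Sum.inr ⟨(a : ℕ), by omega⟩ then 1 else 0)
    else if (a : ℕ) = k + 1 then (if t = Sum.inl ⟨0, by omega⟩ then 1 else 0)
    else (if t = Sum.inl ⟨1, by omega⟩ then 1 else 0)

/-- The subcomplex `Δ_m` of the labeled bipyramid: faces of the bipyramid all of
whose vertex labels divide the monomial `m`. -/
def Dm (n k : ℕ) (hn : 1 ≤ n) (m : (Fin (n + 1) ⊕ Fin (k + 1)) → ℕ)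
    (σ : Finset (Fin (k + 3))) : Prop :=
  ¬ ({w₀ k, w₁ k} : Finset (Fin (k + 3))) ⊆ σ ∧ ∀ a ∈ σ, ∀ t, lab n k hn a t ≤ m t

/-- The monomial `x₀x₁`. -/
def x01 (n k : ℕ) (hn : 1 ≤ n) : (Fin (n + 1) ⊕ Fin (k + 1)) → ℕ := fun t =>
  if t = Sum.inl ⟨0, by omega⟩ then 1 else if t = Sum.inl ⟨1, by omega⟩ then 1 else 0

lemma w₀_ne_w₁ (k : ℕ) : w₀ k ≠ w₁ k := by
  simp [w₀, w₁]

/-- The base vertex `vⱼ` of the bipyramid. -/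
def baseVertex (k : ℕ) (j : Fin (k + 1)) : Fin (k + 3) := Fin.castLE (by omega) j

lemma baseVertex_notMem_apexes (k : ℕ) (j : Fin (k + 1)) :
    baseVertex k j ∉ ({w₀ k, w₁ k} : Finset (Fin (k + 3))) := by
  have := j.isLt
  simp [baseVertex, w₀, w₁, Fin.ext_iff]
  omega

lemma lab_baseVertex (n k : ℕ) (hn : 1 ≤ n) (j : Fin (k + 1)) :
    lab n k hn (baseVertex k j) = fun t => if t = Sum.inr j then 1 else 0 := by
  have := j.isLt
  funext t
  simp [lab, baseVertex, show (j : ℕ) ≤ k by omega]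
  congr

lemma lab_w₀ (n k : ℕ) (hn : 1 ≤ n) :
    lab n k hn (w₀ k) = fun t => if t = Sum.inl ⟨0, by omega⟩ then 1 else 0 := by
  funext t
  simp [lab, w₀]

lemma lab_w₁ (n k : ℕ) (hn : 1 ≤ n) :
    lab n k hn (w₁ k) = fun t => if t = Sum.inl ⟨1, by omega⟩ then 1 else 0 := by
  funext t
  simp [lab, w₁]

/-- Every `Δ_m` with `yⱼ ∣ m` is a cone with apex `vⱼ`. -/
lemma Dm_insert_baseVertex {n k : ℕ} {hn : 1 ≤ n} {m : (Fin (n + 1) ⊕ Fin (k + 1)) → ℕ}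
    {j : Fin (k + 1)} (hj : 1 ≤ m (Sum.inr j)) {σ : Finset (Fin (k + 3))}
    (hσ : Dm n k hn m σ) : Dm n k hn m (insert (baseVertex k j) σ) := by
  refine ⟨?_, ?_⟩
  · rw [Finset.subset_insert_iff_of_notMem (baseVertex_notMem_apexes k j)]
    exact hσ.1
  · rintro a ha t
    rcases Finset.mem_insert.1 ha with rfl | ha
    · rw [lab_baseVertex]
      dsimp only
      split_ifs with ht
      · exact ht ▸ hj
      · exact Nat.zero_le _
    · exact hσ.2 a ha t

lemma Dm_x01_subset {n k : ℕ} {hn : 1 ≤ n} {σ : Finset (Fin (k + 3))}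
    (hσ : Dm n k hn (x01 n k hn) σ) : σ ⊆ {w₀ k, w₁ k} := by
  intro b hb
  by_cases hbk : (b : ℕ) ≤ k
  · have hlab := hσ.2 b hb (Sum.inr ⟨b, by omega⟩)
    simp [lab, x01, hbk] at hlab
  · have := b.isLt
    simp only [Finset.mem_insert, Finset.mem_singleton, w₀, w₁, Fin.ext_iff]
    omega

lemma Dm_x01_card_ne_two {n k : ℕ} {hn : 1 ≤ n} {σ : Finset (Fin (k + 3))}
    (hσ : Dm n k hn (x01 n k hn) σ) : σ.card ≠ 2 := by
  have hssub : σ ⊂ {w₀ k, w₁ k} := ssubset_of_subset_not_subset (Dm_x01_subset hσ) hσ.1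
  have := Finset.card_lt_card hssub
  rw [Finset.card_pair (w₀_ne_w₁ k)] at this
  omega

lemma Dm_x01_w₀ (n k : ℕ) (hn : 1 ≤ n) : Dm n k hn (x01 n k hn) {w₀ k} := by
  refine ⟨fun h => w₀_ne_w₁ k (Finset.mem_singleton.1 (h (by simp))).symm, ?_⟩
  rintro a ha t
  rw [Finset.mem_singleton.1 ha, lab_w₀]
  unfold x01
  split_ifs <;> simp_all

lemma Dm_x01_w₁ (n k : ℕ) (hn : 1 ≤ n) : Dm n k hn (x01 n k hn) {w₁ k} := by
  refine ⟨fun h => w₀_ne_w₁ k (Finset.mem_singleton.1 (h (by simp))), ?_⟩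
  rintro a ha t
  rw [Finset.mem_singleton.1 ha, lab_w₁]
  unfold x01
  split_ifs <;> simp_all

theorem bipyramid_labeling_virtual_not_free_general (K : Type) [Field K]
    (n k : ℕ) (hn : 1 ≤ n) :
    (∀ m : (Fin (n + 1) ⊕ Fin (k + 1)) → ℕ,
        (∃ i : Fin (n + 1), 1 ≤ m (Sum.inl i)) →
        (∃ j : Fin (k + 1), 1 ≤ m (Sum.inr j)) →
        ∀ d : ℕ, 1 ≤ d → HredVanish (Dm n k hn m) K d) ∧
      ¬ HredVanish (Dm n k hn (x01 n k hn)) K 1 :=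
  ⟨fun _ _ ⟨_, hj⟩ d _ => hredVanish_of_insert (fun _ hσ => Dm_insert_baseVertex hj hσ) d,
    not_hredVanish_one (w₀_ne_w₁ k) (Dm_x01_w₀ n k hn) (Dm_x01_w₁ n k hn)
      fun _ => Dm_x01_card_ne_two⟩

/-- For `S = K[x₀,…,xₙ,y₀,…,y_k]` (`n ≥ k ≥ 0`, `n ≥ 1`) with irrelevant ideal
`B = ⟨x₀,…,xₙ⟩ ∩ ⟨y₀,…,y_k⟩`, and the bipyramid over a `k`-simplex lcm-labeled
by `ℓ(vⱼ) = yⱼ`, `ℓ(w₀) = x₀`, `ℓ(w₁) = x₁`: for every monomial `m ∈ B` all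
reduced homology groups `H̃ᵢ(Δ_m; K)` (`i ≥ 0`, i.e. chain degree `≥ 1`)
vanish, while `H̃₀(Δ_{x₀x₁}; K) ≠ 0`. -/
theorem bipyramid_labeling_virtual_not_free (K : Type) [Field K]
    (n k : ℕ) (hkn : k ≤ n) (hn : 1 ≤ n) :
    (∀ m : (Fin (n + 1) ⊕ Fin (k + 1)) → ℕ,
        (∃ i : Fin (n + 1), 1 ≤ m (Sum.inl i)) →
        (∃ j : Fin (k + 1), 1 ≤ m (Sum.inr j)) →
        ∀ d : ℕ, 1 ≤ d → HredVanish (Dm n k hn m) K d) ∧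
      ¬ HredVanish (Dm n k hn (x01 n k hn)) K 1 :=
  bipyramid_labeling_virtual_not_free_general K n k hn

end Stmt8
end

section
/- Let (Δ, ℓ) be a labeled simplicial complex over S = k[x₁,…,xₙ], with associated free complex F_Δ (with F_{Δ,i} the free module on (i−1)-dimensional faces with degree shifts by the labels, and differential given by signed quotients of labels). Then for every i ≥ 0 and every monomial m = x^α, the degree-α component H_i(F_Δ)_α is isomorphic as a k-vector space to the reduced simplicial homology H̃_{i−1}(Δ_m; k). -/
namespace Stmt9

/-- The free complex `F_Δ` associated to a labeled simplicial complex `(Δ, ℓ)`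
over `S = k[x₁,…,xₙ]`, modeled on the free `S`-module with basis all finite
subsets of `V` (the term `F_{Δ,i}` being spanned by faces of cardinality `i`,
i.e. dimension `i - 1`).  The differential is
`∂[σ] = Σ_{v ∈ σ} ± (ℓ(σ)/ℓ(σ∖v)) [σ∖v]`, with signs from the linear order on
`V`; labels are monomials encoded by exponent vectors in `Fin n →₀ ℕ`. -/
noncomputable def FDiff (k : Type) [Field k] (n : ℕ) (V : Type) [DecidableEq V] [LinearOrder V]
    (ℓ : Finset V → (Fin n →₀ ℕ)) :
    (Finset V →₀ MvPolynomial (Fin n) k) →ₗ[MvPolynomial (Fin n) k]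
      (Finset V →₀ MvPolynomial (Fin n) k) :=
  Finsupp.lsum (MvPolynomial (Fin n) k) fun σ => LinearMap.toSpanSingleton _ _
    (∑ v ∈ σ, ((-1 : MvPolynomial (Fin n) k) ^ ((σ.filter (fun u => u < v)).card)) •
      Finsupp.single (σ.erase v) (MvPolynomial.monomial (ℓ σ - ℓ (σ.erase v)) (1 : k)))

/-- The degree-`α` strand of the term `F_{Δ,i}`: the `k`-span of the elements
`x^(α - ℓ(σ)) · [σ]` for faces `σ ∈ Δ` of cardinality `i` whose label divides
`x^α`. -/
noncomputable def strand (k : Type) [Field k] (n : ℕ) (V : Type) [DecidableEq V] [LinearOrder V]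
    (Δ : Finset V → Prop) (ℓ : Finset V → (Fin n →₀ ℕ)) (α : Fin n →₀ ℕ) (i : ℕ) :
    Submodule k (Finset V →₀ MvPolynomial (Fin n) k) :=
  Submodule.span k {z | ∃ σ : Finset V, Δ σ ∧ σ.card = i ∧ ℓ σ ≤ α ∧
    z = Finsupp.single σ (MvPolynomial.monomial (α - ℓ σ) (1 : k))}

/-- Degree-`α` cycles of `F_Δ` in homological degree `i`. -/
noncomputable def cyclesF (k : Type) [Field k] (n : ℕ) (V : Type) [DecidableEq V] [LinearOrder V]
    (Δ : Finset V → Prop) (ℓ : Finset V → (Fin n →₀ ℕ)) (α : Fin n →₀ ℕ) (i : ℕ) :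
    Submodule k (Finset V →₀ MvPolynomial (Fin n) k) :=
  strand k n V Δ ℓ α i ⊓ LinearMap.ker (LinearMap.restrictScalars k (FDiff k n V ℓ))

/-- Degree-`α` boundaries of `F_Δ` in homological degree `i`. -/
noncomputable def boundariesF (k : Type) [Field k] (n : ℕ) (V : Type) [DecidableEq V]
    [LinearOrder V] (Δ : Finset V → Prop) (ℓ : Finset V → (Fin n →₀ ℕ)) (α : Fin n →₀ ℕ)
    (i : ℕ) : Submodule k (Finset V →₀ MvPolynomial (Fin n) k) :=
  Submodule.map (LinearMap.restrictScalars k (FDiff k n V ℓ)) (strand k n V Δ ℓ α (i + 1))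

/-- Cycles of the reduced simplicial chain complex of a complex `Γ` in chain
degree `i` (faces of cardinality `i`). -/
noncomputable def cyclesC (k : Type) [Field k] (V : Type) [DecidableEq V] [LinearOrder V]
    (Γ : Finset V → Prop) (i : ℕ) : Submodule k (Finset V →₀ k) :=
  Finsupp.supported k k {σ : Finset V | Γ σ ∧ σ.card = i} ⊓ LinearMap.ker (bdry V k)

/-- Boundaries of the reduced simplicial chain complex of `Γ` in chain degree `i`. -/
noncomputable def boundariesC (k : Type) [Field k] (V : Type) [DecidableEq V] [LinearOrder V]
    (Γ : Finset V → Prop) (i : ℕ) : Submodule k (Finset V →₀ k) :=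
  Submodule.map (bdry V k) (Finsupp.supported k k {σ : Finset V | Γ σ ∧ σ.card = i + 1})

open Submodule in
theorem Submodule.nonempty_linearEquiv_map_mkQ_map {R M N : Type*} [CommRing R]
    [AddCommGroup M] [Module R M] [AddCommGroup N] [Module R N]
    {f : N →ₗ[R] M} (hf : Function.Injective f) (B C : Submodule R N) :
    Nonempty ((C.map f).map (B.map f).mkQ ≃ₗ[R] C.map B.mkQ) := by
  set ψ := B.mapQ (B.map f) f (le_comap_map f B)
  have hψ : Function.Injective ψ := by
    rw [← LinearMap.ker_eq_bot, ker_mapQ, comap_map_eq_of_injective hf, mkQ_map_self]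
  have hmap : (C.map B.mkQ).map ψ = (C.map f).map (B.map f).mkQ := by
    rw [← map_comp, mapQ_mkQ, map_comp]
  exact ⟨((equivMapOfInjective ψ hψ _).trans (LinearEquiv.ofEq _ _ hmap)).symm⟩

variable {k : Type} [Field k] {n : ℕ} {V : Type}

theorem bdry_single [DecidableEq V] [LinearOrder V] (σ : Finset V) :
    bdry V k (Finsupp.single σ 1) =
      ∑ v ∈ σ, (-1 : k) ^ (σ.filter (· < v)).card • Finsupp.single (σ.erase v) 1 := by
  simp [bdry]

variable (k) (ℓ : Finset V → (Fin n →₀ ℕ)) (α : Fin n →₀ ℕ)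

noncomputable def strandLift : (Finset V →₀ k) →ₗ[k] (Finset V →₀ MvPolynomial (Fin n) k) :=
  Finsupp.lsum k fun σ => (Finsupp.lsingle σ).comp (MvPolynomial.monomial (α - ℓ σ))

noncomputable def strandCoeff : (Finset V →₀ MvPolynomial (Fin n) k) →ₗ[k] (Finset V →₀ k) :=
  Finsupp.lsum k fun σ => (Finsupp.lsingle σ).comp (MvPolynomial.lcoeff k (α - ℓ σ))

variable {k ℓ α}

@[simp]
theorem strandLift_single (σ : Finset V) (c : k) :
    strandLift k ℓ α (Finsupp.single σ c) =
      Finsupp.single σ (MvPolynomial.monomial (α - ℓ σ) c) := by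
  simp [strandLift]

theorem strandCoeff_comp_strandLift : strandCoeff k ℓ α ∘ₗ strandLift k ℓ α = LinearMap.id := by
  ext σ : 2
  simp [strandCoeff]

theorem strandLift_injective : Function.Injective (strandLift k ℓ α) :=
  Function.LeftInverse.injective (g := strandCoeff k ℓ α)
    fun x => LinearMap.congr_fun strandCoeff_comp_strandLift x

variable [DecidableEq V] [LinearOrder V]

theorem FDiff_strandLift_single {σ : Finset V} (hσ : ∀ v ∈ σ, ℓ (σ.erase v) ≤ ℓ σ)
    (hα : ℓ σ ≤ α) :
    FDiff k n V ℓ (strandLift k ℓ α (Finsupp.single σ 1)) =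
      strandLift k ℓ α (bdry V k (Finsupp.single σ 1)) := by
  rw [bdry_single, map_sum, strandLift_single, FDiff, Finsupp.lsum_single,
    LinearMap.toSpanSingleton_apply, Finset.smul_sum]
  refine Finset.sum_congr rfl fun v hv => ?_
  rw [map_smul, strandLift_single, smul_comm, Finsupp.smul_single, Finsupp.smul_single, smul_smul,
    smul_eq_mul, mul_assoc, MvPolynomial.monomial_mul, one_mul,
    tsub_add_tsub_cancel hα (hσ v hv), Finsupp.smul_single, MvPolynomial.smul_eq_C_mul,
    map_pow, map_neg, MvPolynomial.C_1]

theorem FDiff_strandLift {Δ : Finset V → Prop}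
    (hmono : ∀ σ τ : Finset V, σ ⊆ τ → Δ τ → ℓ σ ≤ ℓ τ) {c : Finset V →₀ k}
    (hc : ↑c.support ⊆ {σ | Δ σ ∧ ℓ σ ≤ α}) :
    FDiff k n V ℓ (strandLift k ℓ α c) = strandLift k ℓ α (bdry V k c) := by
  have hc' := (Finsupp.mem_supported k c).2 hc
  rw [Finsupp.supported_eq_span_single] at hc'
  refine LinearMap.eqOn_span' (f := (FDiff k n V ℓ).restrictScalars k ∘ₗ strandLift k ℓ α)
    (g := strandLift k ℓ α ∘ₗ bdry V k) ?_ hc'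
  rintro _ ⟨σ, ⟨hσ, hα⟩, rfl⟩
  exact FDiff_strandLift_single (fun v _ => hmono _ _ (σ.erase_subset v) hσ) hα

variable (Δ : Finset V → Prop) (i : ℕ)

theorem strand_eq_map_strandLift :
    strand k n V Δ ℓ α i =
      (Finsupp.supported k k {σ | (Δ σ ∧ ℓ σ ≤ α) ∧ σ.card = i}).map (strandLift k ℓ α) := by
  rw [Finsupp.supported_eq_span_single, Submodule.map_span, Set.image_image, strand]
  congr 1
  ext z
  simp only [strandLift_single, Set.mem_image]
  constructor
  · rintro ⟨σ, hσ, hcard, hα, rfl⟩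
    exact ⟨σ, ⟨⟨hσ, hα⟩, hcard⟩, rfl⟩
  · rintro ⟨σ, ⟨⟨hσ, hα⟩, hcard⟩, rfl⟩
    exact ⟨σ, hσ, hcard, hα, rfl⟩

variable {Δ}

theorem boundariesF_eq_map_strandLift (hmono : ∀ σ τ : Finset V, σ ⊆ τ → Δ τ → ℓ σ ≤ ℓ τ) :
    boundariesF k n V Δ ℓ α i =
      (boundariesC k V (fun σ => Δ σ ∧ ℓ σ ≤ α) i).map (strandLift k ℓ α) := by
  ext x
  simp only [boundariesF, boundariesC, strand_eq_map_strandLift, Submodule.mem_map,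
    LinearMap.restrictScalars_apply]
  constructor
  · rintro ⟨_, ⟨c, hc, rfl⟩, rfl⟩
    exact ⟨bdry V k c, ⟨c, hc, rfl⟩, (FDiff_strandLift hmono fun _ hσ => (hc hσ).1).symm⟩
  · rintro ⟨_, ⟨c, hc, rfl⟩, rfl⟩
    exact ⟨strandLift k ℓ α c, ⟨c, hc, rfl⟩, FDiff_strandLift hmono fun _ hσ => (hc hσ).1⟩

theorem cyclesF_eq_map_strandLift (hmono : ∀ σ τ : Finset V, σ ⊆ τ → Δ τ → ℓ σ ≤ ℓ τ) :
    cyclesF k n V Δ ℓ α i =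
      (cyclesC k V (fun σ => Δ σ ∧ ℓ σ ≤ α) i).map (strandLift k ℓ α) := by
  ext x
  simp only [cyclesF, cyclesC, strand_eq_map_strandLift, Submodule.mem_inf, Submodule.mem_map,
    LinearMap.mem_ker, LinearMap.restrictScalars_apply]
  constructor
  · rintro ⟨⟨c, hc, rfl⟩, hcycle⟩
    rw [FDiff_strandLift hmono fun _ hσ => (hc hσ).1] at hcycle
    exact ⟨c, ⟨hc, strandLift_injective (hcycle.trans (map_zero _).symm)⟩, rfl⟩
  · rintro ⟨c, ⟨hc, hcycle⟩, rfl⟩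
    refine ⟨⟨c, hc, rfl⟩, ?_⟩
    rw [FDiff_strandLift hmono fun _ hσ => (hc hσ).1, hcycle, map_zero]

theorem homology_strand_iso_general (k : Type) [Field k] (n : ℕ) (V : Type) [DecidableEq V]
    [LinearOrder V]
    (Δ : Finset V → Prop)
    (ℓ : Finset V → (Fin n →₀ ℕ))
    (hmono : ∀ σ τ : Finset V, σ ⊆ τ → Δ τ → ℓ σ ≤ ℓ τ)
    (i : ℕ) (α : Fin n →₀ ℕ) :
    Nonempty (
      (Submodule.map (boundariesF k n V Δ ℓ α i).mkQ (cyclesF k n V Δ ℓ α i))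
      ≃ₗ[k]
      (Submodule.map (boundariesC k V (fun σ => Δ σ ∧ ℓ σ ≤ α) i).mkQ
        (cyclesC k V (fun σ => Δ σ ∧ ℓ σ ≤ α) i))) := by
  rw [cyclesF_eq_map_strandLift i hmono, boundariesF_eq_map_strandLift i hmono]
  exact Submodule.nonempty_linearEquiv_map_mkQ_map strandLift_injective _ _

/-- **Bayer–Peeva–Sturmfels.**  For a labeled simplicial complex `(Δ, ℓ)` over
`S = k[x₁,…,xₙ]` with associated free complex `F_Δ`, for every `i ≥ 0` and
every monomial `m = x^α`, the degree-`α` component `H_i(F_Δ)_α` is isomorphic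
as a `k`-vector space to the reduced simplicial homology `H̃_{i-1}(Δ_m; k)`,
where `Δ_m = {σ ∈ Δ : ℓ(σ) ∣ m}` (faces of cardinality `i` have dimension
`i - 1`, so both sides are computed from faces of cardinality `i`). -/
theorem homology_strand_iso (k : Type) [Field k] (n : ℕ) (V : Type) [DecidableEq V]
    [LinearOrder V] [Fintype V]
    (Δ : Finset V → Prop) (hΔ : IsComplex Δ) (hempty : Δ ∅)
    (ℓ : Finset V → (Fin n →₀ ℕ)) (h0 : ℓ ∅ = 0)
    (hmono : ∀ σ τ : Finset V, σ ⊆ τ → Δ τ → ℓ σ ≤ ℓ τ)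
    (i : ℕ) (α : Fin n →₀ ℕ) :
    Nonempty (
      (Submodule.map (boundariesF k n V Δ ℓ α i).mkQ (cyclesF k n V Δ ℓ α i))
      ≃ₗ[k]
      (Submodule.map (boundariesC k V (fun σ => Δ σ ∧ ℓ σ ≤ α) i).mkQ
        (cyclesC k V (fun σ => Δ σ ∧ ℓ σ ≤ α) i))) :=
  homology_strand_iso_general k n V Δ ℓ hmono i α

end Stmt9
end
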